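/- arXiv:1002.1833 — 3 statements merged into one kernel-verified Lean document; each statement's English description precedes it below -/
import Mathlib

section
/- Compositionality of HOCRWL semantics: for any HOCRWL-program P, any partial expression e and any context C, the HOCRWL-denotation of C[e] equals the union, over all partial patterns t in the HOCRWL-denotation of e, of the HOCRWL-denotations of C[t]; i.e. ⟦C[e]⟧ = ⋃_{t ∈ ⟦e⟧} ⟦C[t]⟧. -/
/-- A signature: function symbols and constructor symbols, each with an arity. -/
structure Sig where
  FS : Type
  CS : Type
  arityF : FS → ℕ
  arityC : CS → ℕ

/-- Applicative partial expressions over a signature.  Variables are natural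
numbers and `bot` is the distinguished 0-ary constructor `⊥`. -/
inductive Exp (σ : Sig) : Type where
  | var : ℕ → Exp σ
  | fn : σ.FS → Exp σ
  | cn : σ.CS → Exp σ
  | bot : Exp σ
  | app : Exp σ → Exp σ → Exp σ

variable {σ : Sig}

/-- `applyList e [e1, …, en]` is the curried application `e e1 … en`. -/
def applyList (e : Exp σ) (es : List (Exp σ)) : Exp σ := es.foldl Exp.app e

/-- Partial patterns `Pat_⊥`. -/
inductive IsPPat : Exp σ → Prop where
  | var (x : ℕ) : IsPPat (Exp.var x)
  | bot : IsPPat (Exp.bot : Exp σ)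
  | capp (c : σ.CS) (ts : List (Exp σ)) (har : ts.length ≤ σ.arityC c)
      (hts : ∀ t ∈ ts, IsPPat t) : IsPPat (applyList (Exp.cn c) ts)
  | fapp (f : σ.FS) (ts : List (Exp σ)) (har : ts.length < σ.arityF f)
      (hts : ∀ t ∈ ts, IsPPat t) : IsPPat (applyList (Exp.fn f) ts)

/-- The constructor `⊥` does not occur in the expression. -/
def BotFree : Exp σ → Prop
  | .bot => False
  | .app a b => BotFree a ∧ BotFree b
  | _ => True

/-- Total patterns `Pat`. -/
def IsPat (t : Exp σ) : Prop := IsPPat t ∧ BotFree t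

/-- First-order patterns `FOPat`. -/
inductive IsFOPat : Exp σ → Prop where
  | var (x : ℕ) : IsFOPat (Exp.var x)
  | capp (c : σ.CS) (ts : List (Exp σ)) (har : ts.length = σ.arityC c)
      (hts : ∀ t ∈ ts, IsFOPat t) : IsFOPat (applyList (Exp.cn c) ts)

/-- The list of occurrences of variables in an expression. -/
def occVars : Exp σ → List ℕ
  | .var x => [x]
  | .app a b => occVars a ++ occVars b
  | _ => []

/-- Applying a substitution to an expression. -/
def subst (θ : ℕ → Exp σ) : Exp σ → Exp σ
  | .var x => θ x
  | .fn f => .fn f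
  | .cn c => .cn c
  | .bot => .bot
  | .app a b => .app (subst θ a) (subst θ b)

/-- Partial-pattern substitutions `PSubst_⊥`. -/
def PSub (θ : ℕ → Exp σ) : Prop := ∀ x, IsPPat (θ x)

/-- A program rule `f t1 … tn → r` (the left-hand side is `f` applied to `lhs`). -/
structure Rule (σ : Sig) where
  fn : σ.FS
  lhs : List (Exp σ)
  rhs : Exp σ

/-- Well-formedness of a rule: `f` is applied to as many arguments as its arity,
the arguments form a linear tuple of total patterns. -/
def Rule.WF (r : Rule σ) : Prop :=
  r.lhs.length = σ.arityF r.fn ∧ (∀ t ∈ r.lhs, IsPat t) ∧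
    (r.lhs.flatMap occVars).Nodup

/-- The rule has no extra variables: all variables of the right-hand side occur
in the left-hand side. -/
def Rule.NoExtra (r : Rule σ) : Prop :=
  ∀ x ∈ occVars r.rhs, x ∈ r.lhs.flatMap occVars

abbrev Program (σ : Sig) := Set (Rule σ)

/-- A program without extra variables, all whose rules are well formed. -/
def WFProg (P : Program σ) : Prop := ∀ r ∈ P, r.WF ∧ r.NoExtra

/-- `h ∈ Σ` (a function symbol, a constructor symbol, or `⊥`). -/
def IsSymb : Exp σ → Prop
  | .fn _ => True
  | .cn _ => True
  | .bot => True
  | _ => False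

/-- HOCRWL derivation trees for statements `e ⇒ t`, with rules
(B), (RR), (DC) and (OR). -/
inductive DTree (P : Program σ) : Exp σ → Exp σ → Type where
  | bot (e : Exp σ) : DTree P e Exp.bot
  | rr (x : ℕ) : DTree P (Exp.var x) (Exp.var x)
  | dc (h : Exp σ) (es ts : List (Exp σ)) (hsym : IsSymb h)
      (hlen : es.length = ts.length) (hpat : IsPPat (applyList h ts))
      (ds : ∀ p ∈ es.zip ts, DTree P p.1 p.2) :
      DTree P (applyList h es) (applyList h ts)
  | opr (r : Rule σ) (hr : r ∈ P) (θ : ℕ → Exp σ) (hθ : PSub θ)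
      (es as : List (Exp σ)) (t : Exp σ) (hlen : es.length = r.lhs.length)
      (ds : ∀ p ∈ es.zip (r.lhs.map (subst θ)), DTree P p.1 p.2)
      (d : DTree P (applyList (subst θ r.rhs) as) t) :
      DTree P (applyList (Exp.fn r.fn) (es ++ as)) t

/-- `P ⊢ e ⇒ t` is derivable in the HOCRWL proof calculus. -/
def Deriv (P : Program σ) (e t : Exp σ) : Prop := Nonempty (DTree P e t)

/-- The HOCRWL denotation `⟦e⟧^P = { t ∈ Pat_⊥ | P ⊢ e ⇒ t }`. -/
def den (P : Program σ) (e : Exp σ) : Set (Exp σ) := {t | IsPPat t ∧ Deriv P e t}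

/-- Observations: total patterns in the denotation. -/
def Obs (P : Program σ) (e : Exp σ) : Set (Exp σ) := {t | t ∈ den P e ∧ BotFree t}

/-- First-order observations: first-order patterns in the denotation. -/
def ObsFO (P : Program σ) (e : Exp σ) : Set (Exp σ) := {t | t ∈ den P e ∧ IsFOPat t}

/-- Contexts `C ::= [ ] | C e | e C`. -/
inductive Cntxt (σ : Sig) : Type where
  | hole : Cntxt σ
  | appL : Cntxt σ → Exp σ → Cntxt σ
  | appR : Exp σ → Cntxt σ → Cntxt σ

/-- Filling the hole of a context with an expression. -/
def Cntxt.fill : Cntxt σ → Exp σ → Exp σ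
  | .hole, e => e
  | .appL C e', e => .app (C.fill e) e'
  | .appR e' C, e => .app e' (C.fill e)

/-- Function symbols occurring in an expression. -/
def expFS : Exp σ → Set σ.FS
  | .fn f => {f}
  | .app a b => expFS a ∪ expFS b
  | _ => ∅

/-- Function symbols occurring in a rule. -/
def ruleFS (r : Rule σ) : Set σ.FS :=
  insert r.fn ((⋃ t ∈ r.lhs, expFS t) ∪ expFS r.rhs)

/-- Function symbols occurring in a program. -/
def progFS (P : Program σ) : Set σ.FS := ⋃ r ∈ P, ruleFS r

/-- Function symbols defined by a program (roots of left-hand sides). -/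
def defs (P : Program σ) : Set σ.FS := Rule.fn '' P

/-- `P'` is a safe extension of `(P, e)`: `P' = P ⊎ P''` where `P''` defines no
function symbol occurring in `P` or in `e`. -/
def SafeExt (P P' : Program σ) (e : Exp σ) : Prop :=
  ∃ P'' : Program σ, P' = P ∪ P'' ∧ Disjoint P P'' ∧
    Disjoint (defs P'') (expFS e ∪ progFS P)

/-- `e ∼ₙ e'` : `n`-extensional equivalence. -/
def ExtEquiv (P : Program σ) (n : ℕ) (e e' : Exp σ) : Prop :=
  ∀ es : List (Exp σ), es.length = n →
    den P (applyList e es) = den P (applyList e' es)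

/-! Every derivable `t` is a partial pattern, so `⟦e⟧ = {t | e ⇒ t}`, and the theorem follows by
induction on the context from its one-step version: `u a ⇒ s` holds iff `u ⇒ t₁`, `a ⇒ t₂` and
`t₁ t₂ ⇒ s` for some `t₁`, `t₂`. A derivation of `u a ⇒ s` factors this way by splitting off the
last argument of its (DC) or (OR) step. Conversely, `e ⇒ t` lets any derivation from `t a₁ … aₙ`
(or from `a t`) be replayed from `e a₁ … aₙ` (or `a e`): a partial pattern `f t₁ … tₘ` has
`m < ar f`, so a rule for `f` consumes all of the `tᵢ`, which are then derived from `e`'s arguments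
instead. -/

theorem List.forall₂_append_left_iff {α β : Type*} {R : α → β → Prop} {l₁ l₂ : List α}
    {m : List β} :
    List.Forall₂ R (l₁ ++ l₂) m ↔
      ∃ m₁ m₂, m = m₁ ++ m₂ ∧ List.Forall₂ R l₁ m₁ ∧ List.Forall₂ R l₂ m₂ := by
  refine ⟨fun h => ?_, fun ⟨m₁, m₂, hm, h₁, h₂⟩ => hm ▸ List.rel_append h₁ h₂⟩
  induction l₁ generalizing m with
  | nil => exact ⟨[], m, rfl, .nil, h⟩
  | cons a l₁ ih =>
    obtain ⟨b, m', hab, h', rfl⟩ := List.forall₂_cons_left_iff.1 h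
    obtain ⟨m₁, m₂, rfl, h₁, h₂⟩ := ih h'
    exact ⟨b :: m₁, m₂, rfl, .cons hab h₁, h₂⟩

theorem List.forall₂_concat_left_iff {α β : Type*} {R : α → β → Prop} {l : List α} {a : α}
    {m : List β} :
    List.Forall₂ R (l ++ [a]) m ↔ ∃ m₀ b, m = m₀ ++ [b] ∧ List.Forall₂ R l m₀ ∧ R a b := by
  simp only [List.forall₂_append_left_iff, List.forall₂_cons_left_iff,
    List.forall₂_nil_left_iff]
  constructor
  · rintro ⟨m₀, _, rfl, h, b, _, hab, rfl, rfl⟩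
    exact ⟨m₀, b, rfl, h, hab⟩
  · rintro ⟨m₀, b, rfl, h, hab⟩
    exact ⟨m₀, [b], rfl, h, b, [], hab, rfl, rfl⟩

theorem List.Forall₂.trans_of {α β γ : Type*} {R : α → β → Prop} {S : β → γ → Prop}
    {T : α → γ → Prop} (hRS : ∀ a b c, R a b → S b c → T a c) :
    ∀ {l₁ l₂ l₃}, List.Forall₂ R l₁ l₂ → List.Forall₂ S l₂ l₃ → List.Forall₂ T l₁ l₃
  | _, _, _, .nil, .nil => .nil
  | _, _, _, .cons h₁ t₁, .cons h₂ t₂ => .cons (hRS _ _ _ h₁ h₂) (trans_of hRS t₁ t₂)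

def Exp.IsApp : Exp σ → Prop
  | .app _ _ => True
  | _ => False

theorem IsSymb.not_isApp {h : Exp σ} (hs : IsSymb h) : ¬ h.IsApp := by
  cases h <;> simp_all [IsSymb, Exp.IsApp]

@[simp]
theorem applyList_nil (e : Exp σ) : applyList e [] = e := rfl

theorem applyList_append (e : Exp σ) (l₁ l₂ : List (Exp σ)) :
    applyList e (l₁ ++ l₂) = applyList (applyList e l₁) l₂ :=
  List.foldl_append

theorem applyList_concat (e : Exp σ) (l : List (Exp σ)) (a : Exp σ) :
    applyList e (l ++ [a]) = .app (applyList e l) a := by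
  rw [applyList_append]; rfl

theorem applyList_eq_app {h : Exp σ} (hh : ¬ h.IsApp) {l : List (Exp σ)} {u a : Exp σ}
    (heq : applyList h l = .app u a) : ∃ l₀, l = l₀ ++ [a] ∧ u = applyList h l₀ := by
  rcases l.eq_nil_or_concat' with rfl | ⟨l₀, b, rfl⟩
  · rw [applyList_nil] at heq
    subst heq
    exact absurd trivial hh
  · rw [applyList_concat] at heq
    injection heq with hu ha
    exact ⟨l₀, by rw [ha], hu.symm⟩

theorem applyList_inj {h h' : Exp σ} (hh : ¬ h.IsApp) (hh' : ¬ h'.IsApp) {l l' : List (Exp σ)} :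
    applyList h l = applyList h' l' ↔ h = h' ∧ l = l' := by
  refine ⟨fun heq => ?_, by rintro ⟨rfl, rfl⟩; rfl⟩
  induction l using List.reverseRecOn generalizing l' with
  | nil =>
    rcases l'.eq_nil_or_concat' with rfl | ⟨l'₀, b, rfl⟩
    · exact ⟨heq, rfl⟩
    · rw [applyList_concat, applyList_nil] at heq
      subst heq
      exact absurd trivial hh
  | append_singleton l a ih =>
    rw [applyList_concat] at heq
    obtain ⟨l'₀, rfl, hl⟩ := applyList_eq_app hh' heq.symm
    obtain ⟨rfl, rfl⟩ := ih hl
    exact ⟨rfl, rfl⟩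

theorem subst_applyList (θ : ℕ → Exp σ) (e : Exp σ) (l : List (Exp σ)) :
    subst θ (applyList e l) = applyList (subst θ e) (l.map (subst θ)) := by
  induction l generalizing e with
  | nil => rfl
  | cons a l ih => exact ih (.app e a)

def Exp.AdmitsPatArgs : Exp σ → ℕ → Prop
  | .fn f, n => n < σ.arityF f
  | .cn c, n => n ≤ σ.arityC c
  | .bot, n => n = 0
  | _, _ => False

theorem Exp.AdmitsPatArgs.mono {h : Exp σ} {m n : ℕ} (hn : h.AdmitsPatArgs n) (hmn : m ≤ n) :
    h.AdmitsPatArgs m := by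
  cases h <;> simp_all [Exp.AdmitsPatArgs] <;> omega

theorem isPPat_applyList_iff {h : Exp σ} (hs : IsSymb h) {ts : List (Exp σ)} :
    IsPPat (applyList h ts) ↔ h.AdmitsPatArgs ts.length ∧ ∀ u ∈ ts, IsPPat u := by
  constructor
  · intro hp
    generalize hX : applyList h ts = X at hp
    cases hp with
    | var x =>
      obtain ⟨rfl, -⟩ := (applyList_inj hs.not_isApp id (l' := [])).1 hX
      exact hs.elim
    | bot =>
      obtain ⟨rfl, rfl⟩ := (applyList_inj hs.not_isApp id (l' := [])).1 hX
      exact ⟨rfl, by simp⟩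
    | capp c ts' har hts =>
      obtain ⟨rfl, rfl⟩ := (applyList_inj hs.not_isApp id).1 hX
      exact ⟨har, hts⟩
    | fapp f ts' har hts =>
      obtain ⟨rfl, rfl⟩ := (applyList_inj hs.not_isApp id).1 hX
      exact ⟨har, hts⟩
  · rintro ⟨har, hts⟩
    cases h with
    | fn f => exact .fapp f ts har hts
    | cn c => exact .capp c ts har hts
    | bot => rw [List.length_eq_zero_iff.1 har]; exact .bot
    | _ => exact hs.elim

theorem IsPPat.subst {t : Exp σ} (ht : IsPPat t) {θ : ℕ → Exp σ} (hθ : PSub θ) :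
    IsPPat (subst θ t) := by
  induction ht with
  | var x => exact hθ x
  | bot => exact .bot
  | capp c ts har _ ih =>
    rw [subst_applyList]
    exact .capp c _ (by simpa using har) (List.forall_mem_map.2 ih)
  | fapp f ts har _ ih =>
    rw [subst_applyList]
    exact .fapp f _ (by simpa using har) (List.forall_mem_map.2 ih)

theorem WFProg.isPPat_lhs_subst {P : Program σ} (hP : WFProg P) {r : Rule σ} (hr : r ∈ P)
    {θ : ℕ → Exp σ} (hθ : PSub θ) : ∀ t ∈ r.lhs.map (subst θ), IsPPat t :=
  List.forall_mem_map.2 fun t ht => ((hP r hr).1.2.1 t ht).1.subst hθ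

section Deriv

variable {P : Program σ}

theorem Deriv.bot (e : Exp σ) : Deriv P e .bot := ⟨.bot e⟩

theorem Deriv.dc {h : Exp σ} (hs : IsSymb h) {es ts : List (Exp σ)}
    (hp : IsPPat (applyList h ts)) (hd : List.Forall₂ (Deriv P) es ts) :
    Deriv P (applyList h es) (applyList h ts) :=
  ⟨.dc h es ts hs hd.length_eq hp fun _ hq => (List.forall₂_zip hd hq).some⟩

theorem Deriv.opr {r : Rule σ} (hr : r ∈ P) {θ : ℕ → Exp σ} (hθ : PSub θ)
    {es as : List (Exp σ)} {t : Exp σ} (hd : List.Forall₂ (Deriv P) es (r.lhs.map (subst θ)))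
    (hrhs : Deriv P (applyList (subst θ r.rhs) as) t) :
    Deriv P (applyList (applyList (.fn r.fn) es) as) t := by
  rw [← applyList_append]
  exact ⟨.opr r hr θ hθ es as t (by simpa using hd.length_eq)
    (fun _ hq => (List.forall₂_zip hd hq).some) hrhs.some⟩

@[elab_as_elim]
theorem Deriv.induction {motive : Exp σ → Exp σ → Prop}
    (bot : ∀ e, motive e .bot) (rr : ∀ x, motive (.var x) (.var x))
    (dc : ∀ h es ts, IsSymb h → IsPPat (applyList h ts) → List.Forall₂ (Deriv P) es ts →
      List.Forall₂ motive es ts → motive (applyList h es) (applyList h ts))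
    (opr : ∀ r ∈ P, ∀ θ, PSub θ → ∀ es as t,
      List.Forall₂ (Deriv P) es (r.lhs.map (subst θ)) →
      Deriv P (applyList (subst θ r.rhs) as) t → motive (applyList (subst θ r.rhs) as) t →
      motive (applyList (applyList (.fn r.fn) es) as) t)
    {e t : Exp σ} (hd : Deriv P e t) : motive e t := by
  obtain ⟨d⟩ := hd
  induction d with
  | bot e => exact bot e
  | rr x => exact rr x
  | dc h es ts hs hlen hp ds ih =>
    exact dc h es ts hs hp (List.forall₂_iff_zip.2 ⟨hlen, fun hq => ⟨ds _ hq⟩⟩)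
      (List.forall₂_iff_zip.2 ⟨hlen, fun hq => ih _ hq⟩)
  | opr r hr θ hθ es as t hlen ds d _ ih =>
    rw [applyList_append]
    exact opr r hr θ hθ es as t
      (List.forall₂_iff_zip.2 ⟨by simpa using hlen, fun hq => ⟨ds _ hq⟩⟩) ⟨d⟩ ih

theorem Deriv.isPPat {e t : Exp σ} (h : Deriv P e t) : IsPPat t :=
  Deriv.induction (fun _ => .bot) .var (fun _ _ _ _ hp _ _ => hp)
    (fun _ _ _ _ _ _ _ _ _ ih => ih) h

theorem mem_den {e t : Exp σ} : t ∈ den P e ↔ Deriv P e t :=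
  ⟨And.right, fun h => ⟨h.isPPat, h⟩⟩

theorem IsPPat.deriv_self {t : Exp σ} (ht : IsPPat t) : Deriv P t t := by
  induction ht with
  | var x => exact ⟨.rr x⟩
  | bot => exact .bot _
  | capp c ts har hts ih => exact .dc (by trivial) (.capp c ts har hts) (List.forall₂_same.2 ih)
  | fapp f ts har hts ih => exact .dc (by trivial) (.fapp f ts har hts) (List.forall₂_same.2 ih)

theorem Deriv.applyList_inv {h : Exp σ} (hs : IsSymb h) {l : List (Exp σ)} {s : Exp σ}
    (hd : Deriv P (applyList h l) s) :
    s = .bot ∨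
    (∃ ts, s = applyList h ts ∧ IsPPat (applyList h ts) ∧ List.Forall₂ (Deriv P) l ts) ∨
    (∃ r ∈ P, ∃ θ, PSub θ ∧ ∃ es as, h = .fn r.fn ∧ l = es ++ as ∧
      List.Forall₂ (Deriv P) es (r.lhs.map (subst θ)) ∧
      Deriv P (applyList (subst θ r.rhs) as) s) := by
  generalize hX : applyList h l = X at hd
  revert hX
  refine Deriv.induction ?_ ?_ ?_ ?_ hd
  · exact fun _ _ => .inl rfl
  · intro x hX
    obtain ⟨rfl, -⟩ := (applyList_inj hs.not_isApp id (l' := [])).1 hX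
    exact hs.elim
  · intro h' es ts hs' hp hd _ hX
    obtain ⟨rfl, rfl⟩ := (applyList_inj hs.not_isApp hs'.not_isApp).1 hX
    exact .inr (.inl ⟨ts, rfl, hp, hd⟩)
  · intro r hr θ hθ es as t hd hrhs _ hX
    rw [← applyList_append] at hX
    obtain ⟨rfl, rfl⟩ := (applyList_inj hs.not_isApp id).1 hX
    exact .inr (.inr ⟨r, hr, θ, hθ, es, as, rfl, rfl, hd, hrhs⟩)

theorem Deriv.trans_applyList (hP : WFProg P) {e t : Exp σ} (het : Deriv P e t)
    {as : List (Exp σ)} {s : Exp σ} (hts : Deriv P (applyList t as) s) :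
    Deriv P (applyList e as) s := by
  suffices ∀ as s, Deriv P (applyList t as) s → Deriv P (applyList e as) s from this as s hts
  refine Deriv.induction ?_ ?_ ?_ ?_ het
  · intro e as s hs
    rcases hs.applyList_inv (h := .bot) trivial with
      rfl | ⟨ts, rfl, hp, -⟩ | ⟨_, _, _, _, _, _, h, -⟩
    · exact .bot _
    · rw [List.length_eq_zero_iff.1 ((isPPat_applyList_iff (h := .bot) trivial).1 hp).1]
      exact .bot _
    · cases h
  · exact fun _ _ _ => id
  · intro h es ts hs hp _ ih as s hts
    have hes : ∀ {ss}, List.Forall₂ (Deriv P) ts ss → List.Forall₂ (Deriv P) es ss :=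
      List.Forall₂.trans_of (fun _ _ c hab hbc => hab [] c hbc) ih
    rw [← applyList_append] at hts ⊢
    rcases hts.applyList_inv hs with rfl | ⟨ss, rfl, hps, hss⟩ |
      ⟨r, hr, θ, hθ, es', as', rfl, hsplit, hd, hrhs⟩
    · exact .bot _
    · obtain ⟨ss₁, ss₂, rfl, h₁, h₂⟩ := List.forall₂_append_left_iff.1 hss
      exact .dc hs hps (List.rel_append (hes h₁) h₂)
    · -- `f ts` is a partial pattern, so the rule consumes all of `ts` and a prefix `m` of `as`.
      have hlt : ts.length < es'.length := by
        have : ts.length < σ.arityF r.fn := ((isPPat_applyList_iff hs).1 hp).1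
        simpa [hd.length_eq, (hP r hr).1.1] using this
      obtain ⟨m, rfl, rfl⟩ : ∃ m, es' = ts ++ m ∧ as = m ++ as' := by
        rcases List.append_eq_append_iff.1 hsplit with h' | ⟨c, rfl, -⟩
        · exact h'
        · simp at hlt
      obtain ⟨M₁, M₂, hM, h₁, h₂⟩ := List.forall₂_append_left_iff.1 hd
      rw [← List.append_assoc, applyList_append]
      exact .opr hr hθ (hM ▸ List.rel_append (hes h₁) h₂) hrhs
  · intro r hr θ hθ es as₀ t hd _ ih as s hts
    rw [← applyList_append]
    exact .opr hr hθ hd (by rw [applyList_append]; exact ih as s hts)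

theorem Deriv.trans (hP : WFProg P) {e t s : Exp σ} (het : Deriv P e t) (hts : Deriv P t s) :
    Deriv P e s :=
  het.trans_applyList hP (as := []) hts

theorem Deriv.trans_app_right (hP : WFProg P) {u t : Exp σ} (hut : Deriv P u t) {a s : Exp σ}
    (h : Deriv P (.app a t) s) : Deriv P (.app a u) s := by
  have hlast : ∀ {es ts}, List.Forall₂ (Deriv P) (es ++ [t]) ts →
      List.Forall₂ (Deriv P) (es ++ [u]) ts := by
    intro es ts hd
    obtain ⟨ts₀, b, rfl, hd₀, hb⟩ := List.forall₂_concat_left_iff.1 hd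
    exact List.rel_append hd₀ (.cons (hut.trans hP hb) .nil)
  suffices ∀ X s, Deriv P X s → ∀ a, X = .app a t → Deriv P (.app a u) s from this _ _ h a rfl
  intro X s hd
  refine Deriv.induction ?_ ?_ ?_ ?_ hd
  · exact fun _ _ _ => .bot _
  · exact fun _ _ h => nomatch h
  · intro h es ts hs hp hd _ a hX
    obtain ⟨es₀, rfl, rfl⟩ := applyList_eq_app hs.not_isApp hX
    rw [← applyList_concat]
    exact .dc hs hp (hlast hd)
  · intro r hr θ hθ es as t' hd hrhs ih a hX
    rcases as.eq_nil_or_concat' with rfl | ⟨as₀, b, rfl⟩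
    · obtain ⟨es₀, rfl, rfl⟩ := applyList_eq_app (h := .fn r.fn) id hX
      rw [← applyList_concat]
      exact .opr (as := []) hr hθ (hlast hd) hrhs
    · rw [applyList_concat] at hX
      injection hX with ha hb
      subst ha hb
      rw [← applyList_concat]
      exact .opr hr hθ hd (by rw [applyList_concat]; exact ih _ (applyList_concat ..))

theorem Deriv.exists_of_app (hP : WFProg P) {u a s : Exp σ} (h : Deriv P (.app u a) s) :
    ∃ t₁ t₂, Deriv P u t₁ ∧ Deriv P a t₂ ∧ Deriv P (.app t₁ t₂) s := by
  suffices ∀ X s, Deriv P X s → ∀ u a, X = .app u a →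
      ∃ t₁ t₂, Deriv P u t₁ ∧ Deriv P a t₂ ∧ Deriv P (.app t₁ t₂) s from this _ _ h u a rfl
  intro X s hd
  refine Deriv.induction ?_ ?_ ?_ ?_ hd
  · exact fun _ _ _ _ => ⟨.bot, .bot, .bot _, .bot _, .bot _⟩
  · exact fun _ _ _ h => nomatch h
  · intro h es ts hs hp hd _ u a hX
    obtain ⟨es₀, rfl, rfl⟩ := applyList_eq_app hs.not_isApp hX
    obtain ⟨ts₀, b, rfl, hd₀, hb⟩ := List.forall₂_concat_left_iff.1 hd
    obtain ⟨har, hpats⟩ := (isPPat_applyList_iff hs).1 hp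
    have hp₀ : IsPPat (applyList h ts₀) := (isPPat_applyList_iff hs).2
      ⟨har.mono (by simp), fun x hx => hpats x (by simp [hx])⟩
    refine ⟨applyList h ts₀, b, .dc hs hp₀ hd₀, hb, ?_⟩
    rw [← applyList_concat]
    exact hp.deriv_self
  · intro r hr θ hθ es as t hd hrhs ih u a hX
    rcases as.eq_nil_or_concat' with rfl | ⟨as₀, b, rfl⟩
    · obtain ⟨es₀, rfl, rfl⟩ := applyList_eq_app (h := .fn r.fn) id hX
      obtain ⟨M₀, q, hM, hd₀, hq⟩ := List.forall₂_concat_left_iff.1 hd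
      have hlhs := hP.isPPat_lhs_subst hr hθ
      have hM₀ : IsPPat (applyList (.fn r.fn) M₀) := by
        refine (isPPat_applyList_iff (h := .fn r.fn) trivial).2
          ⟨?_, fun x hx => hlhs x (by simp [hM, hx])⟩
        have := congrArg List.length hM
        simp only [List.length_map, (hP r hr).1.1, List.length_append,
          List.length_singleton] at this
        show M₀.length < _
        omega
      refine ⟨_, q, .dc (by trivial) hM₀ hd₀, hq, ?_⟩
      rw [← applyList_concat, ← hM]
      exact .opr (as := []) hr hθ (List.forall₂_same.2 fun x hx => (hlhs x hx).deriv_self) hrhs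
    · rw [applyList_concat] at hX
      injection hX with hu ha
      subst hu ha
      obtain ⟨t₁, t₂, h₁, h₂, h₁₂⟩ := ih _ _ (applyList_concat ..)
      exact ⟨t₁, t₂, .opr hr hθ hd h₁, h₂, h₁₂⟩

theorem Deriv.app_of_deriv (hP : WFProg P) {u a t₁ t₂ s : Exp σ} (hu : Deriv P u t₁)
    (ha : Deriv P a t₂) (h : Deriv P (.app t₁ t₂) s) : Deriv P (.app u a) s :=
  Deriv.trans_app_right hP ha (hu.trans_applyList hP (as := [t₂]) h)

theorem deriv_fill_iff (hP : WFProg P) (C : Cntxt σ) {e s : Exp σ} :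
    Deriv P (C.fill e) s ↔ ∃ t, Deriv P e t ∧ Deriv P (C.fill t) s := by
  induction C generalizing s with
  | hole => exact ⟨fun h => ⟨s, h, h.isPPat.deriv_self⟩, fun ⟨_, het, hts⟩ => het.trans hP hts⟩
  | appL C a ih =>
    constructor
    · intro h
      obtain ⟨t₁, t₂, h₁, h₂, h₁₂⟩ := Deriv.exists_of_app hP h
      obtain ⟨t, het, ht⟩ := ih.1 h₁
      exact ⟨t, het, .app_of_deriv hP ht h₂ h₁₂⟩
    · rintro ⟨t, het, h⟩
      obtain ⟨t₁, t₂, h₁, h₂, h₁₂⟩ := Deriv.exists_of_app hP h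
      exact .app_of_deriv hP (ih.2 ⟨t, het, h₁⟩) h₂ h₁₂
  | appR a C ih =>
    constructor
    · intro h
      obtain ⟨t₁, t₂, h₁, h₂, h₁₂⟩ := Deriv.exists_of_app hP h
      obtain ⟨t, het, ht⟩ := ih.1 h₂
      exact ⟨t, het, .app_of_deriv hP h₁ ht h₁₂⟩
    · rintro ⟨t, het, h⟩
      obtain ⟨t₁, t₂, h₁, h₂, h₁₂⟩ := Deriv.exists_of_app hP h
      exact .app_of_deriv hP h₁ (ih.2 ⟨t, het, h₂⟩) h₁₂

end Deriv

/-- **Compositionality of HOCRWL semantics** (Theorem 1): for any program `P`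
without extra variables, any partial expression `e` and any context `C`,
`⟦C[e]⟧ = ⋃_{t ∈ ⟦e⟧} ⟦C[t]⟧`. -/
theorem hocrwl_compositionality (σ : Sig) (P : Program σ) (hP : WFProg P)
    (e : Exp σ) (C : Cntxt σ) :
    den P (C.fill e) = ⋃ t ∈ den P e, den P (C.fill t) := by
  ext s
  simp only [Set.mem_iUnion, exists_prop, mem_den]
  exact deriv_fill_iff hP C
end

section
/- Safe-extension invariance of HOCRWL denotations: if P' is a safe extension of (P, e) — i.e. P' = P ⊎ P'' where P'' contains no defining rule for any function symbol occurring in P or in e — and all programs are free of extra variables, then ⟦e⟧^P = ⟦e⟧^{P'}. -/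
variable {σ : Sig}

/-!
Call a set `S` of function symbols closed for a program (`SymbolClosed`) if every rule whose
root lies in `S` has its right-hand side built from symbols of `S`. A derivation starting from
an expression over `S` then never leaves `S`: (B), (RR) and (DC) produce only symbols of their
premises, and since rules have no extra variables, the contractum of an (OR) step consists of
the rule's right-hand side and of the values of the arguments. In particular such a derivation
only fires rules rooted in `S`. For `S = fs(e) ∪ fs(P)`, which is closed for `P ⊎ P''`, these
are rules of `P`, so any `P ⊎ P''`-derivation from `e` is already a `P`-derivation.
-/

lemma forall_mem_of_forall_mem_zip_snd {α β : Type*} {p : β → Prop} {l₁ : List α}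
    {l₂ : List β} (hlen : l₂.length ≤ l₁.length) (h : ∀ q ∈ l₁.zip l₂, p q.2) :
    ∀ b ∈ l₂, p b := by
  intro b hb
  rw [← List.map_snd_zip hlen, List.mem_map] at hb
  obtain ⟨q, hq, rfl⟩ := hb
  exact h q hq

section FunctionSymbols

variable {S : Set σ.FS}

lemma expFS_applyList_subset_iff {e : Exp σ} {es : List (Exp σ)} :
    expFS (applyList e es) ⊆ S ↔ expFS e ⊆ S ∧ ∀ a ∈ es, expFS a ⊆ S := by
  induction es generalizing e with
  | nil => simp [applyList]
  | cons a es ih =>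
    change expFS (applyList (Exp.app e a) es) ⊆ S ↔ _
    simp only [ih, expFS, Set.union_subset_iff, List.forall_mem_cons, and_assoc]

lemma expFS_subst_subset {θ : ℕ → Exp σ} {a : Exp σ} (ha : expFS a ⊆ S)
    (hθ : ∀ x ∈ occVars a, expFS (θ x) ⊆ S) : expFS (subst θ a) ⊆ S := by
  induction a with
  | var x => exact hθ x (List.mem_singleton_self x)
  | fn | cn | bot => exact ha
  | app b c ihb ihc =>
    simp only [subst, expFS, Set.union_subset_iff, occVars, List.mem_append] at *
    exact ⟨ihb ha.1 fun x hx => hθ x (.inl hx), ihc ha.2 fun x hx => hθ x (.inr hx)⟩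

lemma expFS_subset_expFS_subst {θ : ℕ → Exp σ} {a : Exp σ} {x : ℕ}
    (hx : x ∈ occVars a) : expFS (θ x) ⊆ expFS (subst θ a) := by
  induction a with
  | var y =>
    obtain rfl := List.mem_singleton.1 hx
    exact subset_rfl
  | fn | cn | bot => simp [occVars] at hx
  | app b c ihb ihc =>
    rcases List.mem_append.1 hx with hx | hx
    · exact (ihb hx).trans Set.subset_union_left
    · exact (ihc hx).trans Set.subset_union_right

lemma expFS_subst_rhs_subset {r : Rule σ} (hr : r.NoExtra) (hrhs : expFS r.rhs ⊆ S)
    {θ : ℕ → Exp σ} (hlhs : ∀ t ∈ r.lhs, expFS (subst θ t) ⊆ S) :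
    expFS (subst θ r.rhs) ⊆ S := by
  refine expFS_subst_subset hrhs fun x hx => ?_
  obtain ⟨t, ht, hxt⟩ := List.mem_flatMap.1 (hr x hx)
  exact (expFS_subset_expFS_subst hxt).trans (hlhs t ht)

lemma expFS_rhs_subset_progFS {P : Program σ} {r : Rule σ} (hr : r ∈ P) :
    expFS r.rhs ⊆ progFS P :=
  fun _ hf => Set.mem_biUnion hr (Set.mem_insert_of_mem _ (Set.mem_union_right _ hf))

end FunctionSymbols

def DTree.mono {P P' : Program σ} (hP : P ⊆ P') {e t : Exp σ} :
    DTree P e t → DTree P' e t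
  | .bot e => .bot e
  | .rr x => .rr x
  | .dc h es ts hsym hlen hpat ds =>
    .dc h es ts hsym hlen hpat fun p hp => (ds p hp).mono hP
  | .opr r hr θ hθ es as t hlen ds d =>
    .opr r (hP hr) θ hθ es as t hlen (fun p hp => (ds p hp).mono hP) (d.mono hP)

lemma den_mono {P P' : Program σ} (hP : P ⊆ P') (e : Exp σ) : den P e ⊆ den P' e :=
  fun _ ⟨ht, ⟨d⟩⟩ => ⟨ht, ⟨d.mono hP⟩⟩

def SymbolClosed (Q : Program σ) (S : Set σ.FS) : Prop :=
  ∀ r ∈ Q, r.fn ∈ S → expFS r.rhs ⊆ S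

section SymbolClosed

variable {Q : Program σ} {S : Set σ.FS}

lemma expFS_contractum_subset (hQ : ∀ r ∈ Q, r.NoExtra) (hS : SymbolClosed Q S)
    {r : Rule σ} (hr : r ∈ Q) {θ : ℕ → Exp σ} {es as : List (Exp σ)}
    (hlen : es.length = r.lhs.length)
    (he : expFS (applyList (Exp.fn r.fn) (es ++ as)) ⊆ S)
    (hargs : ∀ p ∈ es.zip (r.lhs.map (subst θ)), expFS p.2 ⊆ S) :
    expFS (applyList (subst θ r.rhs) as) ⊆ S := by
  rw [expFS_applyList_subset_iff] at he ⊢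
  have hlhs : ∀ t ∈ r.lhs, expFS (subst θ t) ⊆ S := by
    rw [← List.forall_mem_map (P := (expFS · ⊆ S))]
    exact forall_mem_of_forall_mem_zip_snd ((List.length_map _).trans_le hlen.ge) hargs
  refine ⟨expFS_subst_rhs_subset (hQ r hr) (hS r hr (he.1 rfl)) hlhs, fun a ha => ?_⟩
  exact he.2 a (List.mem_append_right es ha)

lemma DTree.expFS_subset (hQ : ∀ r ∈ Q, r.NoExtra) (hS : SymbolClosed Q S)
    {e t : Exp σ} (d : DTree Q e t) (he : expFS e ⊆ S) : expFS t ⊆ S := by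
  induction d with
  | bot => exact Set.empty_subset S
  | rr => exact he
  | dc h es ts hsym hlen hpat ds ih =>
    rw [expFS_applyList_subset_iff] at he ⊢
    refine ⟨he.1, forall_mem_of_forall_mem_zip_snd hlen.ge fun p hp => ?_⟩
    exact ih p hp (he.2 p.1 (List.of_mem_zip hp).1)
  | opr r hr θ hθ es as t hlen ds d ih ihd =>
    refine ihd (expFS_contractum_subset hQ hS hr hlen he fun p hp => ih p hp ?_)
    rw [expFS_applyList_subset_iff] at he
    exact he.2 p.1 (List.mem_append_left as (List.of_mem_zip hp).1)

def DTree.restrict (hQ : ∀ r ∈ Q, r.NoExtra) (hS : SymbolClosed Q S) {e t : Exp σ} :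
    DTree Q e t → expFS e ⊆ S → DTree {r ∈ Q | r.fn ∈ S} e t
  | .bot e, _ => .bot e
  | .rr x, _ => .rr x
  | .dc h es ts hsym hlen hpat ds, he =>
    have hes := (expFS_applyList_subset_iff.1 he).2
    .dc h es ts hsym hlen hpat fun p hp =>
      (ds p hp).restrict hQ hS (hes p.1 (List.of_mem_zip hp).1)
  | .opr r hr θ hθ es as t hlen ds d, he =>
    have hes := (expFS_applyList_subset_iff.1 he).2
    have hargs : ∀ p ∈ es.zip (r.lhs.map (subst θ)), expFS p.1 ⊆ S := fun p hp =>
      hes p.1 (List.mem_append_left as (List.of_mem_zip hp).1)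
    have hrS : r ∈ {r ∈ Q | r.fn ∈ S} := ⟨hr, (expFS_applyList_subset_iff.1 he).1 rfl⟩
    .opr r hrS θ hθ es as t hlen
      (fun p hp => (ds p hp).restrict hQ hS (hargs p hp))
      (d.restrict hQ hS (expFS_contractum_subset hQ hS hr hlen he fun p hp =>
        (ds p hp).expFS_subset hQ hS (hargs p hp)))

lemma den_subset_den_restrict (hQ : ∀ r ∈ Q, r.NoExtra) (hS : SymbolClosed Q S)
    {e : Exp σ} (he : expFS e ⊆ S) :
    den Q e ⊆ den {r ∈ Q | r.fn ∈ S} e :=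
  fun _ ⟨ht, ⟨d⟩⟩ => ⟨ht, ⟨d.restrict hQ hS he⟩⟩

end SymbolClosed

/-- **Lemma 1 (safe-extension invariance)**: if `P'` safely extends `(P, e)`
and programs are free of extra variables, then `⟦e⟧^P = ⟦e⟧^{P'}`. -/
theorem den_safeExt (σ : Sig) (P P' : Program σ) (hP' : WFProg P')
    (e : Exp σ) (h : SafeExt P P' e) :
    den P e = den P' e := by
  obtain ⟨P'', rfl, -, hdefs⟩ := h
  set S := expFS e ∪ progFS P
  have hrules : ∀ r ∈ P ∪ P'', r.fn ∈ S → r ∈ P := by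
    rintro r (hr | hr) hfn
    · exact hr
    · exact (Set.disjoint_left.1 hdefs ⟨r, hr, rfl⟩ hfn).elim
  have hclosed : SymbolClosed (P ∪ P'') S := fun r hr hfn =>
    (expFS_rhs_subset_progFS (hrules r hr hfn)).trans Set.subset_union_right
  refine (den_mono Set.subset_union_left e).antisymm ?_
  calc den (P ∪ P'') e
      ⊆ den {r ∈ P ∪ P'' | r.fn ∈ S} e :=
        den_subset_den_restrict (fun r hr => (hP' r hr).2) hclosed Set.subset_union_left
    _ ⊆ den P e := den_mono (fun r hr => hrules r hr.1 hr.2) e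
end

section
/- Let P' = P ⊎ P'' be a program without extra variables such that fs(P) ∩ defs(P'') = ∅. Then for every HOCRWL derivation of P' ⊢ a ⇒ s with defs(P'') ∩ fs(a) = ∅, one has defs(P'') ∩ fs(s) = ∅, and every premise a' ⇒ s' occurring in that derivation satisfies defs(P'') ∩ (fs(a') ∪ fs(s')) = ∅; in particular no rule of P'' is used in the derivation, so P ⊢ a ⇒ s. -/
variable {σ : Sig}

/-- The statements `e' ⇒ t'` occurring strictly below the root of a
derivation tree. -/
def DTree.sub {P : Program σ} : {e t : Exp σ} → DTree P e t → Set (Exp σ × Exp σ)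
  | _, _, .bot _ => ∅
  | _, _, .rr _ => ∅
  | _, _, .dc _h es ts _hsym _hlen _hpat ds =>
      ⋃ p : {p // p ∈ es.zip ts}, insert (p.1.1, p.1.2) (ds p.1 p.2).sub
  | _, _, .opr r _hr θ _hθ es as t _hlen ds d =>
      (⋃ p : {p // p ∈ es.zip (r.lhs.map (subst θ))},
        insert (p.1.1, p.1.2) (ds p.1 p.2).sub) ∪
      insert (applyList (subst θ r.rhs) as, t) d.sub

/-- All statements `e' ⇒ t'` occurring in a derivation tree (its root
statement together with all statements of its subderivations). -/
def DTree.stmts {P : Program σ} {e t : Exp σ} (d : DTree P e t) :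
    Set (Exp σ × Exp σ) :=
  insert (e, t) d.sub

lemma expFS_applyList (h : Exp σ) (es : List (Exp σ)) :
    expFS (applyList h es) = expFS h ∪ ⋃ e ∈ es, expFS e := by
  induction es generalizing h with
  | nil => simp [applyList]
  | cons e es ih =>
    rw [show applyList h (e :: es) = applyList (.app h e) es from rfl, ih]
    simp only [expFS, List.mem_cons, Set.iUnion_iUnion_eq_or_left, Set.union_assoc]

lemma disjoint_expFS_applyList_iff {F : Set σ.FS} {h : Exp σ} {es : List (Exp σ)} :
    Disjoint F (expFS (applyList h es)) ↔
      Disjoint F (expFS h) ∧ ∀ e ∈ es, Disjoint F (expFS e) := by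
  rw [expFS_applyList, Set.disjoint_union_right, Set.disjoint_iUnion₂_right]

lemma disjoint_expFS_subst {F : Set σ.FS} {θ : ℕ → Exp σ} {t : Exp σ}
    (ht : Disjoint F (expFS t)) (hθ : ∀ y ∈ occVars t, Disjoint F (expFS (θ y))) :
    Disjoint F (expFS (subst θ t)) := by
  induction t with
  | var y => exact hθ y (List.mem_singleton_self y)
  | app a b iha ihb =>
    simp only [expFS, subst, occVars, List.mem_append, Set.disjoint_union_right] at ht hθ ⊢
    exact ⟨iha ht.1 fun y hy => hθ y (.inl hy), ihb ht.2 fun y hy => hθ y (.inr hy)⟩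
  | _ => exact ht

lemma disjoint_expFS_of_mem_occVars {F : Set σ.FS} {θ : ℕ → Exp σ} {t : Exp σ}
    (ht : Disjoint F (expFS (subst θ t))) {y : ℕ} (hy : y ∈ occVars t) :
    Disjoint F (expFS (θ y)) := by
  induction t with
  | var z => rwa [List.mem_singleton.mp hy]
  | app a b iha ihb =>
    simp only [expFS, subst, Set.disjoint_union_right] at ht
    rcases List.mem_append.mp hy with hy | hy
    exacts [iha ht.1 hy, ihb ht.2 hy]
  | _ => simp [occVars] at hy

lemma exists_mem_zip_of_mem_right {α β : Type*} {es : List α} {ts : List β}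
    (hlen : es.length = ts.length) {t : β} (ht : t ∈ ts) : ∃ e, (e, t) ∈ es.zip ts := by
  rw [← List.map_snd_zip hlen.ge] at ht
  obtain ⟨⟨e, _⟩, hp, rfl⟩ := List.mem_map.mp ht
  exact ⟨e, hp⟩

lemma Rule.NoExtra.disjoint_expFS_subst_rhs {F : Set σ.FS} {r : Rule σ} {θ : ℕ → Exp σ}
    (hr : r.NoExtra) (hrhs : Disjoint F (expFS r.rhs))
    (hlhs : ∀ l ∈ r.lhs, Disjoint F (expFS (subst θ l))) :
    Disjoint F (expFS (subst θ r.rhs)) :=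
  disjoint_expFS_subst hrhs fun y hy => by
    obtain ⟨l, hl, hyl⟩ := List.mem_flatMap.mp (hr y hy)
    exact disjoint_expFS_of_mem_occVars (hlhs l hl) hyl

namespace DTree

variable {Q : Program σ}

lemma root_mem_stmts {a s : Exp σ} (d : DTree Q a s) : (a, s) ∈ d.stmts :=
  Set.mem_insert _ _

lemma stmts_dc (h : Exp σ) (es ts : List (Exp σ)) (hsym : IsSymb h)
    (hlen : es.length = ts.length) (hpat : IsPPat (applyList h ts))
    (ds : ∀ p ∈ es.zip ts, DTree Q p.1 p.2) :
    (dc h es ts hsym hlen hpat ds).stmts =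
      insert (applyList h es, applyList h ts) (⋃ p : {p // p ∈ es.zip ts}, (ds p.1 p.2).stmts) :=
  rfl

lemma stmts_opr (r : Rule σ) (hr : r ∈ Q) (θ : ℕ → Exp σ) (hθ : PSub θ)
    (es as : List (Exp σ)) (t : Exp σ) (hlen : es.length = r.lhs.length)
    (ds : ∀ p ∈ es.zip (r.lhs.map (subst θ)), DTree Q p.1 p.2)
    (d : DTree Q (applyList (subst θ r.rhs) as) t) :
    (opr r hr θ hθ es as t hlen ds d).stmts =
      insert (applyList (.fn r.fn) (es ++ as), t)
        ((⋃ p : {p // p ∈ es.zip (r.lhs.map (subst θ))}, (ds p.1 p.2).stmts) ∪ d.stmts) :=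
  rfl

theorem disjoint_expFS_of_mem_stmts {F : Set σ.FS} (hnx : ∀ r ∈ Q, r.NoExtra)
    (hrhs : ∀ r ∈ Q, r.fn ∉ F → Disjoint F (expFS r.rhs))
    {a s : Exp σ} (d : DTree Q a s) (ha : Disjoint F (expFS a)) :
    ∀ p ∈ d.stmts, Disjoint F (expFS p.1 ∪ expFS p.2) := by
  induction d with
  | bot e | rr x =>
    intro p hp
    obtain rfl : p = _ := by simpa [stmts, sub] using hp
    simp [expFS, ha]
  | dc h es ts hsym hlen hpat ds ih =>
    obtain ⟨hh, hes⟩ := disjoint_expFS_applyList_iff.mp ha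
    have ihp (p) (hp : p ∈ es.zip ts) := ih p hp (hes _ (List.of_mem_zip hp).1)
    have hts : ∀ t ∈ ts, Disjoint F (expFS t) := fun t ht => by
      obtain ⟨e, hp⟩ := exists_mem_zip_of_mem_right hlen ht
      exact (Set.disjoint_union_right.mp (ihp _ hp _ (root_mem_stmts _))).2
    rw [stmts_dc]
    rintro q (rfl | hq)
    · exact Set.disjoint_union_right.mpr ⟨ha, disjoint_expFS_applyList_iff.mpr ⟨hh, hts⟩⟩
    · obtain ⟨⟨p, hp⟩, hq⟩ := Set.mem_iUnion.mp hq
      exact ihp p hp q hq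
  | opr r hr θ hθ es as t hlen ds d ih ihd =>
    obtain ⟨hfn, hargs⟩ := disjoint_expFS_applyList_iff.mp ha
    have hes (e) (he : e ∈ es) := hargs e (List.mem_append_left as he)
    have ihp (p) (hp : p ∈ es.zip (r.lhs.map (subst θ))) :=
      ih p hp (hes _ (List.of_mem_zip hp).1)
    have hlhs : ∀ l ∈ r.lhs, Disjoint F (expFS (subst θ l)) := fun l hl => by
      obtain ⟨e, hp⟩ := exists_mem_zip_of_mem_right (by simpa using hlen)
        (List.mem_map_of_mem (f := subst θ) hl)
      exact (Set.disjoint_union_right.mp (ihp _ hp _ (root_mem_stmts _))).2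
    have hbody := ihd (disjoint_expFS_applyList_iff.mpr
      ⟨(hnx r hr).disjoint_expFS_subst_rhs (hrhs r hr (Set.disjoint_singleton_right.mp hfn)) hlhs,
        fun e he => hargs e (List.mem_append_right es he)⟩)
    rw [stmts_opr]
    rintro q (rfl | ⟨hq | hq⟩)
    · exact Set.disjoint_union_right.mpr
        ⟨ha, (Set.disjoint_union_right.mp (hbody _ (root_mem_stmts _))).2⟩
    · obtain ⟨⟨p, hp⟩, hq⟩ := Set.mem_iUnion.mp hq
      exact ihp p hp q hq
    · exact hbody q hq

theorem deriv_of_disjoint_expFS {F : Set σ.FS} {Q' : Program σ}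
    (hQ : ∀ r ∈ Q, r.fn ∉ F → r ∈ Q') {a s : Exp σ} (d : DTree Q a s)
    (hd : ∀ p ∈ d.stmts, Disjoint F (expFS p.1)) : Deriv Q' a s := by
  induction d with
  | bot e => exact ⟨.bot e⟩
  | rr x => exact ⟨.rr x⟩
  | dc h es ts hsym hlen hpat ds ih =>
    rw [stmts_dc] at hd
    exact ⟨.dc h es ts hsym hlen hpat fun p hp =>
      (ih p hp fun q hq => hd q (.inr (Set.mem_iUnion.mpr ⟨⟨p, hp⟩, hq⟩))).some⟩
  | opr r hr θ hθ es as t hlen ds d ih ihd =>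
    rw [stmts_opr] at hd
    have hfn : r.fn ∉ F :=
      Set.disjoint_singleton_right.mp (disjoint_expFS_applyList_iff.mp (hd _ (.inl rfl))).1
    exact ⟨.opr r (hQ r hr hfn) θ hθ es as t hlen
      (fun p hp => (ih p hp fun q hq =>
        hd q (.inr (.inl (Set.mem_iUnion.mpr ⟨⟨p, hp⟩, hq⟩)))).some)
      (ihd fun q hq => hd q (.inr (.inr hq))).some⟩

end DTree

theorem safeExt_derivation_general (σ : Sig) (P P'' : Program σ)
    (hwf : WFProg (P ∪ P''))
    (hdisj : Disjoint (defs P'') (progFS P))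
    (a s : Exp σ) (d : DTree (P ∪ P'') a s)
    (ha : Disjoint (defs P'') (expFS a)) :
    Disjoint (defs P'') (expFS s) ∧
    (∀ p ∈ d.stmts, Disjoint (defs P'') (expFS p.1 ∪ expFS p.2)) ∧
    Deriv P a s := by
  have hP : ∀ r ∈ P ∪ P'', r.fn ∉ defs P'' → r ∈ P := fun r hr hfn =>
    hr.resolve_right fun hr'' => hfn ⟨r, hr'', rfl⟩
  have hrhs (r) (hr : r ∈ P ∪ P'') (hfn : r.fn ∉ defs P'') :
      Disjoint (defs P'') (expFS r.rhs) :=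
    hdisj.mono_right <| (Set.subset_union_right.trans (Set.subset_insert _ _)).trans
      (Set.subset_biUnion_of_mem (u := ruleFS) (hP r hr hfn))
  have hstmts := d.disjoint_expFS_of_mem_stmts (fun r hr => (hwf r hr).2) hrhs ha
  exact ⟨(Set.disjoint_union_right.mp (hstmts _ d.root_mem_stmts)).2, hstmts,
    d.deriv_of_disjoint_expFS hP fun p hp => (Set.disjoint_union_right.mp (hstmts p hp)).1⟩

/-- **Key property for Lemma 1**: let `P' = P ⊎ P''` be a program without extra
variables with `fs(P) ∩ defs(P'') = ∅`.  Then for every derivation of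
`P' ⊢ a ⇒ s` with `defs(P'') ∩ fs(a) = ∅` one has `defs(P'') ∩ fs(s) = ∅`,
every statement `a' ⇒ s'` occurring in the derivation satisfies
`defs(P'') ∩ (fs(a') ∪ fs(s')) = ∅`, and (no rule of `P''` being used)
`P ⊢ a ⇒ s`. -/
theorem safeExt_derivation (σ : Sig) (P P'' : Program σ)
    (hwf : WFProg (P ∪ P'')) (hsep : Disjoint P P'')
    (hdisj : Disjoint (defs P'') (progFS P))
    (a s : Exp σ) (d : DTree (P ∪ P'') a s)
    (ha : Disjoint (defs P'') (expFS a)) :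
    Disjoint (defs P'') (expFS s) ∧
    (∀ p ∈ d.stmts, Disjoint (defs P'') (expFS p.1 ∪ expFS p.2)) ∧
    Deriv P a s :=
  safeExt_derivation_general σ P P'' hwf hdisj a s d ha
end
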